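/- For any $d$ sets of points placed as $\lfloor n/d \rfloor$ equally spaced points on $d$ parallel lines through the vertices of a $(d-1)$-dimensional simplex in $\mathbb{R}^d$, the number of distinct volumes of full-dimensional simplices spanned by the resulting point set is at most $\lfloor (n-1)/d \rfloor$. -/

import Mathlib

/-!
Lifting each point `x` to `(1, x)`, `d!` times the volume of a simplex is the absolute
determinant of its lifted vertices. By pigeonhole two of the `d + 1` vertices, `v a + j u` and
`v a + j' u`, lie on a common line; subtracting their lifted rows leaves `(j' - j) • (0, u)`, after
which the other rows reduce modulo `(0, u)` to rows `(1, v b)`. The determinant is therefore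
`j' - j` times `0` or `± det P`, where `P` has rows `(1, v b)` and `(0, u)`, so every nonzero volume
is one of the `⌊n/d⌋ - 1` values `k |det P| / d!` with `1 ≤ k < ⌊n/d⌋`.
-/

/-- The `d`-volume of the simplex with vertices `p 0, …, p d` in `ℝᵈ`. -/
noncomputable def simplexVol (d : ℕ) (p : Fin (d + 1) → (Fin d → ℝ)) : ℝ :=
  |Matrix.det (Matrix.of fun i : Fin d => p i.succ - p 0)| / (Nat.factorial d)

open Matrix

section Determinants

variable {R : Type*} [CommRing R]

theorem Matrix.det_of_sub_zero_eq_det_of_cons_one {d : ℕ} (p : Fin (d + 1) → Fin d → R) :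
    det (of fun i : Fin d => p i.succ - p 0) =
      det (of fun i => (Fin.cons 1 (p i) : Fin (d + 1) → R)) := by
  set M : Matrix (Fin (d + 1)) (Fin (d + 1)) R := of fun i => Fin.cons 1 (p i)
  set A : Matrix (Fin (d + 1)) (Fin (d + 1)) R := of fun i => M i - if i = 0 then 0 else M 0
  have hA : A.det = M.det :=
    det_eq_of_forall_row_eq_smul_add_const (fun i => if i = 0 then 0 else -1) 0 (by simp)
      fun i x => by by_cases hi : i = 0 <;> simp [A, hi, sub_eq_add_neg]
  have hminor : A.submatrix Fin.succ Fin.succ = of fun i : Fin d => p i.succ - p 0 := by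
    ext i x; simp [A, M, Fin.succ_ne_zero]
  rw [← hA, det_succ_column_zero, Fin.sum_univ_succ,
    Finset.sum_eq_zero fun i _ => by simp [A, M]]
  simp [hminor, A, M]

variable {n : Type*} [Fintype n] [DecidableEq n]

theorem Matrix.det_of_add_smul_of_row_eq (r : n → n → R) (c : n → R) (w : n → R) {s s' : n}
    (hss : s ≠ s') (hr : r s = r s') :
    det (of fun i => r i + c i • w) = (c s' - c s) * det ((of r).updateRow s' w) := by
  set M : Matrix n n R := of fun i => r i + c i • w
  have hrow : M s' + (-1 : R) • M s = (c s' - c s) • w := by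
    change r s' + c s' • w + (-1 : R) • (r s + c s • w) = _
    rw [hr]; module
  rw [← det_updateRow_add_smul_self M hss.symm (-1), hrow, det_updateRow_smul]
  congr 1
  refine det_eq_of_forall_row_eq_smul_add_const (Function.update c s' 0) s' (by simp) fun i x => ?_
  by_cases hi : i = s' <;> simp [M, hi, updateRow_apply]

theorem Matrix.abs_det_submatrix_eq_or_det_submatrix_eq_zero {S : Type*} [CommRing S]
    [LinearOrder S] [IsStrictOrderedRing S] (A : Matrix n n S) (σ : n → n) :
    |(A.submatrix σ id).det| = |A.det| ∨ (A.submatrix σ id).det = 0 := by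
  by_cases hσ : Function.Injective σ
  · left
    obtain ⟨e, rfl⟩ : ∃ e : Equiv.Perm n, ⇑e = σ :=
      ⟨.ofBijective σ hσ.bijective_of_finite, rfl⟩
    rw [det_permute]
    rcases Int.units_eq_one_or (Equiv.Perm.sign e) with h | h <;> simp [h]
  · right
    obtain ⟨i, j, hij, hne⟩ : ∃ i j, σ i = σ j ∧ i ≠ j := by
      simpa [Function.Injective] using hσ
    exact det_zero_of_row_eq hne (by ext; simp [hij])

end Determinants

theorem Nat.div_sub_one_le_sub_one_div (n d : ℕ) : n / d - 1 ≤ (n - 1) / d := by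
  rcases Nat.eq_zero_or_pos d with rfl | hd
  · simp
  · refine Nat.sub_le_of_le_add ?_
    rw [← Nat.add_div_right _ hd]
    exact Nat.div_le_div_right (by omega)

/-- `|det (prismMatrix v u)| / d!` is the volume of the simplex with vertices `v` and `v 0 + u`,
the smallest step of the construction. -/
noncomputable def prismMatrix {d : ℕ} (v : Fin d → Fin d → ℝ) (u : Fin d → ℝ) :
    Matrix (Fin (d + 1)) (Fin (d + 1)) ℝ :=
  of (Fin.lastCases (Fin.cons 0 u) fun i => Fin.cons 1 (v i))

variable {d : ℕ} (v : Fin d → Fin d → ℝ) (u : Fin d → ℝ)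

theorem simplexVol_eq_of_mem_lines (p : Fin (d + 1) → Fin d → ℝ) (a : Fin (d + 1) → Fin d)
    (j : Fin (d + 1) → ℝ) (hp : ∀ i, p i = v (a i) + j i • u) {s s' : Fin (d + 1)}
    (hss : s ≠ s') (ha : a s = a s') :
    simplexVol d p = |j s' - j s| *
      |det ((prismMatrix v u).submatrix
        (Function.update (Fin.castSucc ∘ a) s' (Fin.last d)) id)| / d.factorial := by
  have hrows : (fun i => (Fin.cons 1 (p i) : Fin (d + 1) → ℝ)) =
      fun i => prismMatrix v u (a i).castSucc + j i • Fin.cons 0 u := by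
    ext i x
    refine Fin.cases ?_ (fun x => ?_) x <;> simp [prismMatrix, hp]
  have hminor : (of fun i => prismMatrix v u (a i).castSucc).updateRow s' (Fin.cons 0 u) =
      (prismMatrix v u).submatrix (Function.update (Fin.castSucc ∘ a) s' (Fin.last d)) id := by
    ext i x
    by_cases hi : i = s' <;> simp [prismMatrix, hi, updateRow_apply]
  rw [simplexVol, det_of_sub_zero_eq_det_of_cons_one, hrows,
    det_of_add_smul_of_row_eq _ _ _ hss (by rw [ha]), hminor, abs_mul]

theorem simplexVol_mem_image_Icc {m : ℕ} (p : Fin (d + 1) → Fin d → ℝ)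
    (a : Fin (d + 1) → Fin d) (j : Fin (d + 1) → ℕ) (hj : ∀ i, j i < m)
    (hp : ∀ i, p i = v (a i) + (j i : ℝ) • u)
    (hvol : simplexVol d p ≠ 0) :
    simplexVol d p ∈
      (fun k : ℕ => k * |det (prismMatrix v u)| / d.factorial) '' Set.Icc 1 (m - 1) := by
  obtain ⟨s, s', hss, ha⟩ := Fintype.exists_ne_map_eq_of_card_lt a (by simp)
  have hvol_eq := simplexVol_eq_of_mem_lines v u p a (fun i => j i) hp hss ha
  set k := ((j s' : ℤ) - j s).natAbs
  have hk : |(j s' : ℝ) - j s| = k := by simp [k, Nat.cast_natAbs]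
  rw [hk] at hvol_eq
  rcases abs_det_submatrix_eq_or_det_submatrix_eq_zero (prismMatrix v u)
    (Function.update (Fin.castSucc ∘ a) s' (Fin.last d)) with hdet | hdet
  · refine ⟨k, ⟨?_, ?_⟩, by rw [hvol_eq, hdet]⟩
    · by_contra hk0
      exact hvol (by simp [hvol_eq, show k = 0 by omega])
    · have := hj s; have := hj s'; omega
  · exact absurd (by simp [hvol_eq, hdet]) hvol

theorem stmt8_general (d : ℕ) (n : ℕ)
    (v : Fin d → (Fin d → ℝ))
    (u : Fin d → ℝ)
    (S : Set (Fin d → ℝ))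
    (hS : S = {x | ∃ (i : Fin d) (j : ℕ), j < n / d ∧ x = v i + (j : ℝ) • u}) :
    {t : ℝ | t ≠ 0 ∧ ∃ p : Fin (d + 1) → (Fin d → ℝ), (∀ i, p i ∈ S) ∧
        Function.Injective p ∧ simplexVol d p = t}.ncard ≤ (n - 1) / d := by
  set stepVolume : ℕ → ℝ := fun k => k * |det (prismMatrix v u)| / d.factorial
  have hvolumes : {t : ℝ | t ≠ 0 ∧ ∃ p : Fin (d + 1) → (Fin d → ℝ),
      (∀ i, p i ∈ S) ∧ Function.Injective p ∧ simplexVol d p = t} ⊆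
        stepVolume '' Set.Icc 1 (n / d - 1) := by
    rintro t ⟨ht, p, hpS, -, rfl⟩
    rw [hS] at hpS
    choose a j hj hp using hpS
    exact simplexVol_mem_image_Icc v u p a j hj hp ht
  calc _ ≤ _ := Set.ncard_le_ncard hvolumes ((Set.finite_Icc _ _).image _)
    _ ≤ (Set.Icc 1 (n / d - 1)).ncard := Set.ncard_image_le (Set.finite_Icc _ _)
    _ = n / d - 1 := by simp
    _ ≤ (n - 1) / d := Nat.div_sub_one_le_sub_one_div n d

/-- placing `⌊n/d⌋` equally spaced points on `d` parallel lines
through the vertices of a nondegenerate `(d-1)`-simplex yields a point set whose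
full-dimensional simplices have at most `⌊(n-1)/d⌋` distinct volumes. -/
theorem stmt8 (d : ℕ) (hd : 1 ≤ d) (n : ℕ)
    (v : Fin d → (Fin d → ℝ)) (hv : AffineIndependent ℝ v)
    (u : Fin d → ℝ) (hu : u ∉ (affineSpan ℝ (Set.range v)).direction)
    (S : Set (Fin d → ℝ))
    (hS : S = {x | ∃ (i : Fin d) (j : ℕ), j < n / d ∧ x = v i + (j : ℝ) • u}) :
    {t : ℝ | t ≠ 0 ∧ ∃ p : Fin (d + 1) → (Fin d → ℝ), (∀ i, p i ∈ S) ∧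
        Function.Injective p ∧ simplexVol d p = t}.ncard ≤ (n - 1) / d :=
  stmt8_general d n v u S hS
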